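/- arXiv:2105.10468 — 3 statements merged into one kernel-verified Lean document; each statement's English description precedes it below -/
import Mathlib

section
/- (Mass conservation of CNFD) Let 0 < ε ≤ 1, τ > 0, and let V^{n+1/2}_j, A^{n+1/2}_{1,j} ∈ ℝ for j = 0,…,N and n ≥ 0. Suppose the sequence of periodic grid functions Φⁿ (n ≥ 0) satisfies the CNFD scheme: iδ⁺_tΦⁿ_j = (−iσ₁δ_x + σ₃)Φ^{n+1/2}_j + ε(V^{n+1/2}_j I₂ − A^{n+1/2}_{1,j}σ₁)Φ^{n+1/2}_j for all j = 0,…,N−1 and n ≥ 0. Then the discrete mass is conserved: ‖Φⁿ‖²_{l²} = h ∑_{j=0}^{N−1} |Φⁿ_j|² = h ∑_{j=0}^{N−1} |Φ⁰_j|² = ‖Φ⁰‖²_{l²} for all n ≥ 0. -/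
/-! Write `u = Φ^{n+1/2}` and `L` for the spatial operator of the scheme. Pairing the scheme with
`u_j` gives `|Φⁿ⁺¹_j|² − |Φⁿ_j|² = 2τ Im ⟨u_j, (L u)_j⟩`, so it suffices that `∑_j ⟨u_j, (L u)_j⟩` is
real. The pointwise part `σ₃ + ε(V I₂ − A σ₁)` of `L` is a Hermitian matrix, and `−iσ₁δ_x` is
symmetric on periodic grid functions by summation by parts, since `σ₁` is Hermitian. -/

open Complex Matrix Finset

noncomputable section

/-- The Pauli matrix σ₁. -/
def σ1 : Matrix (Fin 2) (Fin 2) ℂ := !![0, 1; 1, 0]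

/-- The Pauli matrix σ₃. -/
def σ3 : Matrix (Fin 2) (Fin 2) ℂ := !![1, 0; 0, -1]

/-- Centered spatial finite difference of a (periodic) grid function. -/
def δx (h : ℝ) (U : ℤ → Fin 2 → ℂ) (j : ℤ) : Fin 2 → ℂ :=
  ((2 * h : ℝ) : ℂ)⁻¹ • (U (j + 1) - U (j - 1))

/-- The time average Φ^{n+1/2}. -/
def mid (Φ : ℕ → ℤ → Fin 2 → ℂ) (n : ℕ) (j : ℤ) : Fin 2 → ℂ :=
  (2 : ℂ)⁻¹ • (Φ (n + 1) j + Φ n j)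

lemma Function.Periodic.sum_range_sub {M : Type*} [AddCommGroup M] {f : ℤ → M} {N : ℕ}
    (hf : Function.Periodic f N) : ∑ j ∈ range N, (f (j + 1) - f j) = 0 := by
  have := Finset.sum_range_sub (fun j : ℕ => f j) N
  push_cast at this
  rw [this, ← zero_add (N : ℤ), hf, sub_self]

section

variable {ι : Type*} [Fintype ι]

lemma sum_norm_sq_sub_sum_norm_sq (v w : ι → ℂ) :
    ∑ i, ‖v i‖ ^ 2 - ∑ i, ‖w i‖ ^ 2 = (star (v + w) ⬝ᵥ (v - w)).re := by
  simp only [dotProduct, re_sum, ← sum_sub_distrib, Pi.star_apply, Pi.add_apply, Pi.sub_apply,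
    Complex.sq_norm, normSq_apply, RCLike.star_def, mul_re, conj_re, conj_im, add_re, add_im,
    sub_re, sub_im]
  refine sum_congr rfl fun i _ => ?_
  ring

lemma sum_norm_sq_sub_eq_of_crankNicolson {τ : ℝ} (hτ : τ ≠ 0)
    {v w L : ι → ℂ} (hL : I • ((τ : ℂ)⁻¹ • (v - w)) = L) :
    ∑ i, ‖v i‖ ^ 2 - ∑ i, ‖w i‖ ^ 2 = 2 * τ * (star ((2 : ℂ)⁻¹ • (v + w)) ⬝ᵥ L).im := by
  subst hL
  rw [sum_norm_sq_sub_sum_norm_sq, star_smul, smul_dotProduct, dotProduct_smul, dotProduct_smul]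
  generalize star (v + w) ⬝ᵥ (v - w) = z
  rw [star_inv₀, star_ofNat, smul_eq_mul, smul_eq_mul, smul_eq_mul,
    show (2 : ℂ)⁻¹ * (I * ((τ : ℂ)⁻¹ * z)) = I * (((2 * τ)⁻¹ : ℝ) * z) by push_cast; ring,
    I_mul_im, re_ofReal_mul]
  field_simp

lemma Matrix.IsHermitian.re_star_dotProduct_mulVec_comm {A : Matrix ι ι ℂ} (hA : A.IsHermitian)
    (v w : ι → ℂ) : (star v ⬝ᵥ A *ᵥ w).re = (star w ⬝ᵥ A *ᵥ v).re := by
  rw [star_dotProduct, star_mulVec, hA.eq, ← dotProduct_mulVec, Complex.star_def, conj_re]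

lemma Matrix.IsHermitian.re_sum_star_dotProduct_mulVec_centralDiff {S : Matrix ι ι ℂ}
    (hS : S.IsHermitian) {u : ℤ → ι → ℂ} {N : ℕ} (hu : Function.Periodic u N) :
    (∑ j ∈ range N, star (u j) ⬝ᵥ S *ᵥ (u (j + 1) - u (j - 1))).re = 0 := by
  set F : ℤ → ℝ := fun j => (star (u (j - 1)) ⬝ᵥ S *ᵥ u j).re
  have hF : Function.Periodic F N := fun j => by
    simp only [F]
    rw [add_sub_right_comm, hu, hu]
  have hterm (j : ℤ) : (star (u j) ⬝ᵥ S *ᵥ (u (j + 1) - u (j - 1))).re = F (j + 1) - F j := by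
    rw [mulVec_sub, dotProduct_sub, sub_re, hS.re_star_dotProduct_mulVec_comm (u j) (u (j - 1))]
    simp only [F, add_sub_cancel_right]
  rw [re_sum]
  simp only [hterm]
  exact hF.sum_range_sub

end

lemma isHermitian_σ1 : σ1.IsHermitian := by
  ext i j; fin_cases i <;> fin_cases j <;> simp [σ1]

lemma isHermitian_σ3 : σ3.IsHermitian := by
  ext i j; fin_cases i <;> fin_cases j <;> simp [σ3]

def diracOp (h ε : ℝ) (V A : ℤ → ℝ) (u : ℤ → Fin 2 → ℂ) (j : ℤ) : Fin 2 → ℂ :=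
  (-I) • σ1 *ᵥ δx h u j + σ3 *ᵥ u j + (ε : ℂ) • ((V j : ℂ) • u j - (A j : ℂ) • σ1 *ᵥ u j)

lemma diracOp_eq (h ε : ℝ) (V A : ℤ → ℝ) (u : ℤ → Fin 2 → ℂ) (j : ℤ) :
    diracOp h ε V A u j =
      (-I * ((2 * h)⁻¹ : ℝ)) • σ1 *ᵥ (u (j + 1) - u (j - 1)) +
        (σ3 + ((ε * V j : ℝ) : ℂ) • 1 - ((ε * A j : ℝ) : ℂ) • σ1) *ᵥ u j := by
  simp only [diracOp, δx, mulVec_smul, sub_mulVec, add_mulVec, smul_mulVec, one_mulVec]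
  push_cast
  module

lemma isHermitian_potential (ε v a : ℝ) :
    (σ3 + ((ε * v : ℝ) : ℂ) • 1 - ((ε * a : ℝ) : ℂ) • σ1).IsHermitian :=
  (isHermitian_σ3.add (isHermitian_one.smul (conj_ofReal _))).sub
    (isHermitian_σ1.smul (conj_ofReal _))

lemma im_sum_star_dotProduct_diracOp (h ε : ℝ) (V A : ℤ → ℝ) {u : ℤ → Fin 2 → ℂ} {N : ℕ}
    (hu : Function.Periodic u N) :
    (∑ j ∈ range N, star (u j) ⬝ᵥ diracOp h ε V A u j).im = 0 := by
  have hpot (j : ℤ) :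
      (star (u j) ⬝ᵥ (σ3 + ((ε * V j : ℝ) : ℂ) • 1 - ((ε * A j : ℝ) : ℂ) • σ1) *ᵥ u j).im = 0 :=
    (isHermitian_potential _ _ _).im_star_dotProduct_mulVec_self (u j)
  simp only [diracOp_eq, dotProduct_add, dotProduct_smul, smul_eq_mul, sum_add_distrib, ← mul_sum,
    add_im, im_sum, hpot, sum_const_zero, add_zero, mul_im,
    isHermitian_σ1.re_sum_star_dotProduct_mulVec_centralDiff hu]
  simp

lemma sum_sum_norm_sq_succ_eq {h τ ε : ℝ} (hτ : τ ≠ 0) {V A : ℤ → ℝ} {Φ : ℕ → ℤ → Fin 2 → ℂ}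
    {N n : ℕ} (hper : Function.Periodic (Φ n) N) (hper' : Function.Periodic (Φ (n + 1)) N)
    (hscheme : ∀ j, I • ((τ : ℂ)⁻¹ • (Φ (n + 1) j - Φ n j)) = diracOp h ε V A (mid Φ n) j) :
    ∑ j ∈ range N, ∑ i, ‖Φ (n + 1) j i‖ ^ 2 = ∑ j ∈ range N, ∑ i, ‖Φ n j i‖ ^ 2 := by
  have hmid : Function.Periodic (mid Φ n) N := fun j => by simp only [mid, hper j, hper' j]
  rw [← sub_eq_zero, ← sum_sub_distrib]
  calc ∑ j ∈ range N, (∑ i, ‖Φ (n + 1) j i‖ ^ 2 - ∑ i, ‖Φ n j i‖ ^ 2)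
      = 2 * τ * (∑ j ∈ range N, star (mid Φ n j) ⬝ᵥ diracOp h ε V A (mid Φ n) j).im := by
        rw [im_sum, mul_sum]
        exact sum_congr rfl fun j _ => sum_norm_sq_sub_eq_of_crankNicolson hτ (hscheme j)
    _ = 0 := by rw [im_sum_star_dotProduct_diracOp h ε V A hmid, mul_zero]

/-- `Vh n j` and `Ah n j` stand for `V^{n+1/2}_j` and `A^{n+1/2}_{1,j}`. -/
theorem cnfd_mass_conservation_general (N : ℕ) (h : ℝ) (τ ε : ℝ) (hτ : 0 < τ)
    (Vh Ah : ℕ → ℤ → ℝ)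
    (Φ : ℕ → ℤ → Fin 2 → ℂ)
    (hper : ∀ n : ℕ, ∀ j : ℤ, Φ n (j + N) = Φ n j)
    (hscheme : ∀ n : ℕ, ∀ j : ℤ,
      Complex.I • ((τ : ℂ)⁻¹ • (Φ (n + 1) j - Φ n j)) =
        (-Complex.I) • σ1.mulVec (δx h (mid Φ n) j) + σ3.mulVec (mid Φ n j) +
          (ε : ℂ) • (((Vh n j : ℝ) : ℂ) • mid Φ n j -
            ((Ah n j : ℝ) : ℂ) • σ1.mulVec (mid Φ n j))) :
    ∀ n : ℕ, h * ∑ j ∈ Finset.range N, ∑ i, ‖Φ n (j : ℤ) i‖ ^ 2 =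
      h * ∑ j ∈ Finset.range N, ∑ i, ‖Φ 0 (j : ℤ) i‖ ^ 2 := by
  intro n
  congr 1
  induction n with
  | zero => rfl
  | succ n ih => exact (sum_sum_norm_sq_succ_eq hτ.ne' (hper n) (hper (n + 1)) (hscheme n)).trans ih

/-- Mass conservation of the Crank–Nicolson finite difference (CNFD) method
for the 1D Dirac equation.  Here `Vh n j` and `Ah n j` denote the potential
values `V^{n+1/2}_j` and `A^{n+1/2}_{1,j}`. -/
theorem cnfd_mass_conservation (a b : ℝ) (hab : a < b) (N : ℕ) (hN : 0 < N)
    (hNe : Even N) (h : ℝ) (hh : h = (b - a) / N)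
    (τ ε : ℝ) (hτ : 0 < τ) (hε0 : 0 < ε) (hε1 : ε ≤ 1)
    (Vh Ah : ℕ → ℤ → ℝ)
    (Φ : ℕ → ℤ → Fin 2 → ℂ)
    (hper : ∀ n : ℕ, ∀ j : ℤ, Φ n (j + N) = Φ n j)
    (hscheme : ∀ n : ℕ, ∀ j : ℤ,
      Complex.I • ((τ : ℂ)⁻¹ • (Φ (n + 1) j - Φ n j)) =
        (-Complex.I) • σ1.mulVec (δx h (mid Φ n) j) + σ3.mulVec (mid Φ n j) +
          (ε : ℂ) • (((Vh n j : ℝ) : ℂ) • mid Φ n j -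
            ((Ah n j : ℝ) : ℂ) • σ1.mulVec (mid Φ n j))) :
    ∀ n : ℕ, h * ∑ j ∈ Finset.range N, ∑ i, ‖Φ n (j : ℤ) i‖ ^ 2 =
      h * ∑ j ∈ Finset.range N, ∑ i, ‖Φ 0 (j : ℤ) i‖ ^ 2 :=
  cnfd_mass_conservation_general N h τ ε hτ Vh Ah Φ hper hscheme

end
end

section
/- (Stability condition for LFFD, amplification-symbol bound) Let h > 0, V_max ≥ 0, A_max ≥ 0, 0 < ε ≤ 1, and let V, A ∈ ℝ with |V| ≤ V_max and |A| ≤ A_max. Suppose 0 < τ ≤ h / (V_max h + √(h² + (1 + h A_max)²)). Then for every φ ∈ ℝ and every sign σ ∈ {−1, +1}, the eigenvalue θ = εV + σ √((sin(φ)/h − εA)² + 1) of the LFFD amplification symbol satisfies τ|θ| ≤ 1; consequently, by the unit-modulus root property of the leap-frog amplification polynomial λ² + 2iτθλ − 1 = 0, every Fourier mode of the leap-frog finite difference (LFFD) scheme with constant potentials V and A is stable. -/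
/-!
The bound `|sin φ / h - ε A| ≤ 1 / h + A_max` gives
`|θ| ≤ V_max + √(h² + (1 + h A_max)²) / h`, which is exactly `1 / τ_max` for the step size bound
on `τ`. For a real `a` with `|a| ≤ 1`, the imaginary part of `λ² + 2iaλ - 1 = 0` reads
`Re λ (Im λ + a) = 0`, and `Re λ = 0` forces `(Im λ + a)² = a² - 1 ≤ 0`; so `Im λ = -a` in either
case, and the real part then reads `|λ|² = (Re λ)² + a² = 1`.
-/

open Complex

theorem Complex.norm_eq_one_of_sq_add_two_mul_I_mul_sub_one_eq_zero {a : ℝ} (ha : |a| ≤ 1)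
    {z : ℂ} (hz : z ^ 2 + 2 * I * a * z - 1 = 0) : ‖z‖ = 1 := by
  have hre : z.re ^ 2 - z.im ^ 2 - 2 * a * z.im - 1 = 0 := by
    have := congrArg re hz
    simp only [sq, sub_re, add_re, mul_re, mul_im, I_re, I_im, ofReal_re, ofReal_im, re_ofNat,
      im_ofNat, one_re, zero_re] at this
    linarith
  have him : z.re * (z.im + a) = 0 := by
    have := congrArg im hz
    simp only [sq, sub_im, add_im, mul_im, mul_re, I_re, I_im, ofReal_re, ofReal_im, re_ofNat,
      im_ofNat, one_im, zero_im] at this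
    linarith
  have him_eq : z.im = -a := by
    rcases mul_eq_zero.mp him with hx | hy
    · have hsq : (z.im + a) ^ 2 ≤ 0 := by
        rw [hx] at hre
        nlinarith [sq_abs a, abs_nonneg a]
      exact eq_neg_of_add_eq_zero_left (pow_eq_zero_iff two_ne_zero |>.mp (hsq.antisymm (sq_nonneg _)))
    · linarith
  rw [norm_def, normSq_apply, him_eq]
  convert Real.sqrt_one using 2
  nlinarith

theorem Real.sqrt_sin_div_sub_sq_add_one_le {h c C : ℝ} (hh : 0 < h) (hc : |c| ≤ C) (φ : ℝ) :
    √((sin φ / h - c) ^ 2 + 1) ≤ √(h ^ 2 + (1 + h * C) ^ 2) / h := by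
  have hshift : |sin φ - h * c| ≤ 1 + h * C := calc
    |sin φ - h * c| ≤ |sin φ| + |h * c| := abs_sub _ _
    _ ≤ 1 + h * C := by
      rw [abs_mul, abs_of_pos hh]
      gcongr
      exact abs_sin_le_one φ
  have hscale : ((sin φ / h - c) ^ 2 + 1) * h ^ 2 = (sin φ - h * c) ^ 2 + h ^ 2 := by
    field_simp
  rw [le_div_iff₀ hh, ← sqrt_sq hh.le, ← sqrt_mul (by positivity), sqrt_sq hh.le, hscale,
    add_comm (h ^ 2)]
  apply sqrt_le_sqrt
  have := sq_le_sq' (by linarith [neg_abs_le (sin φ - h * c)]) (le_of_abs_le hshift)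
  linarith

theorem abs_lffd_eigenvalue_le {h Vmax Amax ε V A s : ℝ} (hh : 0 < h) (hε : |ε| ≤ 1)
    (hV : |V| ≤ Vmax) (hA : |A| ≤ Amax) (hs : |s| = 1) (φ : ℝ) :
    |ε * V + s * √((Real.sin φ / h - ε * A) ^ 2 + 1)| ≤
      (Vmax * h + √(h ^ 2 + (1 + h * Amax) ^ 2)) / h := by
  have hεV : |ε * V| ≤ Vmax := by
    rw [abs_mul]
    nlinarith [abs_nonneg ε, abs_nonneg V]
  have hεA : |ε * A| ≤ Amax := by
    rw [abs_mul]
    nlinarith [abs_nonneg ε, abs_nonneg A]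
  calc |ε * V + s * √((Real.sin φ / h - ε * A) ^ 2 + 1)|
      ≤ |ε * V| + |s * √((Real.sin φ / h - ε * A) ^ 2 + 1)| := abs_add_le _ _
    _ = |ε * V| + √((Real.sin φ / h - ε * A) ^ 2 + 1) := by
        rw [abs_mul s, hs, one_mul, abs_of_nonneg (Real.sqrt_nonneg _)]
    _ ≤ Vmax + √(h ^ 2 + (1 + h * Amax) ^ 2) / h :=
        add_le_add hεV (Real.sqrt_sin_div_sub_sq_add_one_le hh hεA φ)
    _ = (Vmax * h + √(h ^ 2 + (1 + h * Amax) ^ 2)) / h := by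
        field_simp

theorem lffd_stability_general (h Vmax Amax ε τ V A : ℝ) (hh : 0 < h)
    (hε0 : 0 < ε) (hε1 : ε ≤ 1)
    (hV : |V| ≤ Vmax) (hA : |A| ≤ Amax) (hτ0 : 0 < τ)
    (hτ : τ ≤ h / (Vmax * h + Real.sqrt (h ^ 2 + (1 + h * Amax) ^ 2))) :
    ∀ φ : ℝ, ∀ s : ℝ, s = 1 ∨ s = -1 →
      τ * |ε * V + s * Real.sqrt ((Real.sin φ / h - ε * A) ^ 2 + 1)| ≤ 1 ∧
      ∀ lam : ℂ,
        lam ^ 2 +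
            2 * Complex.I *
              ((τ * (ε * V + s * Real.sqrt ((Real.sin φ / h - ε * A) ^ 2 + 1)) : ℝ) : ℂ) *
              lam - 1 = 0 →
          ‖lam‖ = 1 := by
  intro φ s hs
  have hs1 : |s| = 1 := by rcases hs with rfl | rfl <;> simp
  have hVmax : 0 ≤ Vmax := (abs_nonneg V).trans hV
  have hD : 0 < Vmax * h + √(h ^ 2 + (1 + h * Amax) ^ 2) := by positivity
  have hstep : τ * |ε * V + s * √((Real.sin φ / h - ε * A) ^ 2 + 1)| ≤ 1 := calc
    _ ≤ h / (Vmax * h + √(h ^ 2 + (1 + h * Amax) ^ 2)) *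
          ((Vmax * h + √(h ^ 2 + (1 + h * Amax) ^ 2)) / h) :=
        mul_le_mul hτ (abs_lffd_eigenvalue_le hh (abs_le.mpr ⟨by linarith, hε1⟩) hV hA hs1 φ)
          (abs_nonneg _) (by positivity)
    _ = 1 := by field_simp
  refine ⟨hstep, fun lam hlam => norm_eq_one_of_sq_add_two_mul_I_mul_sub_one_eq_zero ?_ hlam⟩
  rwa [abs_mul, abs_of_pos hτ0]

/-- Stability of the LFFD method: under the stability condition
τ ≤ h/(V_max h + √(h² + (1 + hA_max)²)), each eigenvalue
θ = εV ± √((sin φ/h − εA)² + 1) of the LFFD amplification symbol satisfies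
τ|θ| ≤ 1, and consequently every root λ of λ² + 2iτθλ − 1 = 0 has |λ| = 1,
i.e. every Fourier mode of the LFFD scheme is stable. -/
theorem lffd_stability (h Vmax Amax ε τ V A : ℝ) (hh : 0 < h)
    (hVmax : 0 ≤ Vmax) (hAmax : 0 ≤ Amax) (hε0 : 0 < ε) (hε1 : ε ≤ 1)
    (hV : |V| ≤ Vmax) (hA : |A| ≤ Amax) (hτ0 : 0 < τ)
    (hτ : τ ≤ h / (Vmax * h + Real.sqrt (h ^ 2 + (1 + h * Amax) ^ 2))) :
    ∀ φ : ℝ, ∀ s : ℝ, s = 1 ∨ s = -1 →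
      τ * |ε * V + s * Real.sqrt ((Real.sin φ / h - ε * A) ^ 2 + 1)| ≤ 1 ∧
      ∀ lam : ℂ,
        lam ^ 2 +
            2 * Complex.I *
              ((τ * (ε * V + s * Real.sqrt ((Real.sin φ / h - ε * A) ^ 2 + 1)) : ℝ) : ℂ) *
              lam - 1 = 0 →
          ‖lam‖ = 1 :=
  lffd_stability_general h Vmax Amax ε τ V A hh hε0 hε1 hV hA hτ0 hτ
end

section
/- (Stability condition for LFFS, amplification-symbol bound) Let h > 0, V_max ≥ 0, A_max ≥ 0, 0 < ε ≤ 1, and let V, A ∈ ℝ with |V| ≤ V_max and |A| ≤ A_max. Suppose 0 < τ ≤ h / (V_max h + √(h² + (π + h A_max)²)). Then for every real s with |s| ≤ π/h and every sign σ ∈ {−1, +1}, the eigenvalue θ = εV + σ √((s − εA)² + 1) of the LFFS amplification symbol satisfies τ|θ| ≤ 1; consequently, by the unit-modulus root property of the leap-frog amplification polynomial λ² + 2iτθλ − 1 = 0, every Fourier mode of the leap-frog Fourier spectral (LFFS) scheme with constant potentials V and A is stable. -/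
open Complex

/-! Bounding `|εV| ≤ V_max` and `|s − εA| ≤ π/h + A_max` gives
`|θ| ≤ V_max + √((π/h + A_max)² + 1)`, and the stability condition on `τ` is exactly `τ` times this
bound being at most `1`. For real `c` with `|c| ≤ 1` the roots of `λ² + 2icλ − 1` are
`λ = ±√(1 − c²) − ic`, both of modulus one. -/

lemma norm_eq_one_of_sq_add_two_I_mul_sub_one_eq_zero {c : ℝ} (hc : |c| ≤ 1) {z : ℂ}
    (hz : z ^ 2 + 2 * I * c * z - 1 = 0) : ‖z‖ = 1 := by
  set r := √(1 - c ^ 2)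
  have hr : r ^ 2 = 1 - c ^ 2 := Real.sq_sqrt (sub_nonneg.2 ((sq_le_one_iff_abs_le_one c).2 hc))
  have hrC : (r : ℂ) ^ 2 = 1 - (c : ℂ) ^ 2 := by exact_mod_cast hr
  have hsq : (z + c * I) ^ 2 = (r : ℂ) ^ 2 := by
    linear_combination hz - hrC + (c : ℂ) ^ 2 * I_sq
  obtain ⟨x, hx, rfl⟩ : ∃ x : ℝ, x ^ 2 = r ^ 2 ∧ z = x + ((-c : ℝ) : ℂ) * I := by
    rcases sq_eq_sq_iff_eq_or_eq_neg.1 hsq with h | h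
    · exact ⟨r, rfl, by push_cast; linear_combination h⟩
    · exact ⟨-r, by ring, by push_cast; linear_combination h⟩
  rw [norm_add_mul_I, hx, hr]
  simp

lemma abs_add_mul_sqrt_sq_sub_add_one_le {ε V A Vmax Amax s S sg : ℝ} (hε0 : 0 ≤ ε)
    (hε1 : ε ≤ 1) (hV : |V| ≤ Vmax) (hA : |A| ≤ Amax) (hs : |s| ≤ S) (hsg : |sg| = 1) :
    |ε * V + sg * √((s - ε * A) ^ 2 + 1)| ≤ Vmax + √((S + Amax) ^ 2 + 1) := by
  have hεV : |ε * V| ≤ Vmax := by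
    rw [abs_mul, abs_of_nonneg hε0]
    exact (mul_le_of_le_one_left (abs_nonneg V) hε1).trans hV
  have hεA : |ε * A| ≤ Amax := by
    rw [abs_mul, abs_of_nonneg hε0]
    exact (mul_le_of_le_one_left (abs_nonneg A) hε1).trans hA
  have hshift : |s - ε * A| ≤ S + Amax := (abs_sub _ _).trans (add_le_add hs hεA)
  have hsqrt : √((s - ε * A) ^ 2 + 1) ≤ √((S + Amax) ^ 2 + 1) :=
    Real.sqrt_le_sqrt (add_le_add_left (sq_le_sq' (abs_le.1 hshift).1 (abs_le.1 hshift).2) 1)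
  calc |ε * V + sg * √((s - ε * A) ^ 2 + 1)|
      ≤ |ε * V| + |sg * √((s - ε * A) ^ 2 + 1)| := abs_add_le _ _
    _ = |ε * V| + √((s - ε * A) ^ 2 + 1) := by
      rw [abs_mul sg, hsg, one_mul, abs_of_nonneg (Real.sqrt_nonneg _)]
    _ ≤ Vmax + √((S + Amax) ^ 2 + 1) := add_le_add hεV hsqrt

lemma div_mul_add_sqrt_sq_add_sq_eq_inv {h a b V : ℝ} (hh : 0 < h) :
    h / (V * h + √(h ^ 2 + (a + h * b) ^ 2)) = (V + √((a / h + b) ^ 2 + 1))⁻¹ := by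
  have hfactor : √(h ^ 2 + (a + h * b) ^ 2) = h * √((a / h + b) ^ 2 + 1) := by
    rw [← Real.sqrt_sq hh.le, ← Real.sqrt_mul (sq_nonneg h), Real.sqrt_sq hh.le]
    congr 1
    field_simp
    ring
  rw [hfactor, mul_comm V h, ← mul_add, div_mul_cancel_left₀ hh.ne']

theorem lffs_stability_general (h Vmax Amax ε τ V A : ℝ) (hh : 0 < h)
    (hε0 : 0 < ε) (hε1 : ε ≤ 1)
    (hV : |V| ≤ Vmax) (hA : |A| ≤ Amax) (hτ0 : 0 < τ)
    (hτ : τ ≤ h / (Vmax * h + Real.sqrt (h ^ 2 + (Real.pi + h * Amax) ^ 2))) :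
    ∀ s : ℝ, |s| ≤ Real.pi / h → ∀ sg : ℝ, sg = 1 ∨ sg = -1 →
      τ * |ε * V + sg * Real.sqrt ((s - ε * A) ^ 2 + 1)| ≤ 1 ∧
      ∀ lam : ℂ,
        lam ^ 2 +
            2 * Complex.I *
              ((τ * (ε * V + sg * Real.sqrt ((s - ε * A) ^ 2 + 1)) : ℝ) : ℂ) *
              lam - 1 = 0 →
          ‖lam‖ = 1 := by
  intro s hs sg hsg
  set K := Vmax + √((Real.pi / h + Amax) ^ 2 + 1)
  have hsg : |sg| = 1 := by rcases hsg with rfl | rfl <;> simp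
  have hθ := abs_add_mul_sqrt_sq_sub_add_one_le hε0.le hε1 hV hA hs hsg
  have hK : 0 < K := by
    have : 1 ≤ √((Real.pi / h + Amax) ^ 2 + 1) := Real.one_le_sqrt.2 (by nlinarith)
    linarith [(abs_nonneg V).trans hV]
  rw [div_mul_add_sqrt_sq_add_sq_eq_inv hh] at hτ
  have hstable : τ * |ε * V + sg * √((s - ε * A) ^ 2 + 1)| ≤ 1 :=
    calc _ ≤ K⁻¹ * K := mul_le_mul hτ hθ (abs_nonneg _) (inv_nonneg.2 hK.le)
      _ = 1 := inv_mul_cancel₀ hK.ne'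
  refine ⟨hstable, fun lam hlam => norm_eq_one_of_sq_add_two_I_mul_sub_one_eq_zero ?_ hlam⟩
  rwa [abs_mul, abs_of_pos hτ0]

/-- Stability of the LFFS method: under the stability condition
τ ≤ h/(V_max h + √(h² + (π + hA_max)²)), each eigenvalue
θ = εV ± √((s − εA)² + 1) (with |s| ≤ π/h) of the LFFS amplification symbol
satisfies τ|θ| ≤ 1, and consequently every root λ of λ² + 2iτθλ − 1 = 0 has
|λ| = 1, i.e. every Fourier mode of the LFFS scheme is stable. -/
theorem lffs_stability (h Vmax Amax ε τ V A : ℝ) (hh : 0 < h)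
    (hVmax : 0 ≤ Vmax) (hAmax : 0 ≤ Amax) (hε0 : 0 < ε) (hε1 : ε ≤ 1)
    (hV : |V| ≤ Vmax) (hA : |A| ≤ Amax) (hτ0 : 0 < τ)
    (hτ : τ ≤ h / (Vmax * h + Real.sqrt (h ^ 2 + (Real.pi + h * Amax) ^ 2))) :
    ∀ s : ℝ, |s| ≤ Real.pi / h → ∀ sg : ℝ, sg = 1 ∨ sg = -1 →
      τ * |ε * V + sg * Real.sqrt ((s - ε * A) ^ 2 + 1)| ≤ 1 ∧
      ∀ lam : ℂ,
        lam ^ 2 +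
            2 * Complex.I *
              ((τ * (ε * V + sg * Real.sqrt ((s - ε * A) ^ 2 + 1)) : ℝ) : ℂ) *
              lam - 1 = 0 →
          ‖lam‖ = 1 :=
  lffs_stability_general h Vmax Amax ε τ V A hh hε0 hε1 hV hA hτ0 hτ
end
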